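/- Let G be a finite simple graph on vertex set {1,…,n} with edge set E, let c be a positive integer, and let f_c be the associated regression objective. For every z ∈ ℝ^n, the coordinatewise clamped vector z' defined by z'_j = max(−1, min(1, z_j)) satisfies f_c(z') ≤ f_c(z). In particular, the infimum of f_c over ℝ^n equals its infimum over [−1,1]^n. -/
import Mathlib


open Classical Finset

/-- The regression objective `f_c(z) = Σ_{{u,v}∈E} (z_u + z_v)² + c·Σ_j (|z_j| − 1)²`
associated to a finite simple graph `G` and a positive integer `c`; it equals
`‖ |Wz| − y ‖₂²` for the corresponding ℓ₂-regression-with-hidden-signs instance. -/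
noncomputable def fObj {n : ℕ} (G : SimpleGraph (Fin n)) [Fintype G.edgeSet] (c : ℕ)
    (z : Fin n → ℝ) : ℝ :=
  (∑ e ∈ G.edgeFinset, Sym2.lift ⟨fun u v => (z u + z v) ^ 2, fun u v => by ring⟩ e)
    + c * ∑ j : Fin n, (|z j| - 1) ^ 2

private lemma clamp_cases (x : ℝ) :
    (x ≤ -1 ∧ max (-1) (min 1 x) = -1) ∨
    (-1 ≤ x ∧ x ≤ 1 ∧ max (-1) (min 1 x) = x) ∨
    (1 ≤ x ∧ max (-1) (min 1 x) = 1) := by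
  rcases le_total x (-1) with h | h
  · left
    refine ⟨h, ?_⟩
    rw [min_eq_right (by linarith), max_eq_left h]
  · rcases le_total x 1 with h2 | h2
    · right; left
      refine ⟨h, h2, ?_⟩
      rw [min_eq_right h2, max_eq_right h]
    · right; right
      refine ⟨h2, ?_⟩
      rw [min_eq_left h2, max_eq_right (by linarith)]

private lemma clamp_sq (u v : ℝ) :
    (max (-1) (min 1 u) + max (-1) (min 1 v)) ^ 2 ≤ (u + v) ^ 2 := by
  rcases clamp_cases u with ⟨h1, e1⟩ | ⟨h1, h1', e1⟩ | ⟨h1, e1⟩ <;>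
    rcases clamp_cases v with ⟨h2, e2⟩ | ⟨h2, h2', e2⟩ | ⟨h2, e2⟩ <;>
    rw [e1, e2] <;> nlinarith [sq_nonneg (u + v), sq_nonneg (u - v), sq_nonneg (u + 1),
      sq_nonneg (v + 1), sq_nonneg (u - 1), sq_nonneg (v - 1)]

private lemma clamp_abs_sq (x : ℝ) :
    (|max (-1) (min 1 x)| - 1) ^ 2 ≤ (|x| - 1) ^ 2 := by
  rcases clamp_cases x with ⟨h, e⟩ | ⟨h, h', e⟩ | ⟨h, e⟩ <;> rw [e]
  all_goals simp only [abs_neg, abs_one]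
  all_goals nlinarith [sq_nonneg (|x| - 1)]

private lemma fObj_nonneg {n : ℕ} (G : SimpleGraph (Fin n)) [Fintype G.edgeSet] (c : ℕ)
    (z : Fin n → ℝ) : 0 ≤ fObj G c z := by
  unfold fObj
  refine add_nonneg (Finset.sum_nonneg fun e _ => ?_)
    (mul_nonneg (by positivity) (Finset.sum_nonneg fun j _ => sq_nonneg _))
  refine Sym2.inductionOn e fun u v => ?_
  simp only [Sym2.lift_mk]
  exact sq_nonneg _

/-- Clamping each coordinate of `z` to `[−1,1]` does not increase `f_c`; consequently the
infimum of `f_c` over `ℝ^n` equals its infimum over `[−1,1]^n`. -/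
theorem fObj_clamp {n : ℕ} (G : SimpleGraph (Fin n)) [Fintype G.edgeSet]
    (c : ℕ) (hc : 0 < c) :
    (∀ z : Fin n → ℝ, fObj G c (fun j => max (-1) (min 1 (z j))) ≤ fObj G c z) ∧
    (⨅ z : Fin n → ℝ, fObj G c z)
      = ⨅ z : {z : Fin n → ℝ // ∀ j, z j ∈ Set.Icc (-1 : ℝ) 1}, fObj G c z.1 := by
  have key : ∀ z : Fin n → ℝ, fObj G c (fun j => max (-1) (min 1 (z j))) ≤ fObj G c z := by
    intro z
    unfold fObj
    refine add_le_add (Finset.sum_le_sum fun e _ => ?_)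
      (mul_le_mul_of_nonneg_left (Finset.sum_le_sum fun j _ => clamp_abs_sq (z j))
        (by positivity))
    refine Sym2.inductionOn e fun u v => ?_
    simp only [Sym2.lift_mk]
    exact clamp_sq (z u) (z v)
  refine ⟨key, ?_⟩
  haveI : Nonempty {z : Fin n → ℝ // ∀ j, z j ∈ Set.Icc (-1 : ℝ) 1} :=
    ⟨⟨fun _ => 0, fun j => by norm_num⟩⟩
  have hmem : ∀ z : Fin n → ℝ, ∀ j, (fun j => max (-1) (min 1 (z j))) j ∈ Set.Icc (-1 : ℝ) 1 :=
    fun z j => ⟨le_max_left _ _, max_le (by norm_num) (min_le_left _ _)⟩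
  have hbd1 : BddBelow (Set.range fun z : Fin n → ℝ => fObj G c z) :=
    ⟨0, by rintro x ⟨z, rfl⟩; exact fObj_nonneg G c z⟩
  have hbd2 : BddBelow (Set.range
      fun z : {z : Fin n → ℝ // ∀ j, z j ∈ Set.Icc (-1 : ℝ) 1} => fObj G c z.1) :=
    ⟨0, by rintro x ⟨z, rfl⟩; exact fObj_nonneg G c z.1⟩
  refine le_antisymm (le_ciInf fun z => ciInf_le hbd1 z.1) (le_ciInf fun z => ?_)
  exact le_trans (ciInf_le hbd2 ⟨fun j => max (-1) (min 1 (z j)), hmem z⟩) (key z)
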